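/- Let f, g : ℝ^d → ℝ be polyhedral functions. Then there exists a polyhedral function h such that S(f) ∪ S(g) ⊆ S(h) and Lip(h) ≤ Lip(f) + Lip(g), where S(φ) denotes the set of x such that φ is not differentiable at prox_φ(x). Concretely, if f = max_i f_i and g = max_j g_j with gradients v_i and u_j, then h = max_{i,j} (f_i + g_j + ⟨v_i, u_j⟩) works. -/
import Mathlib


open Set RealInnerProductSpace

/-- A function is polyhedral if it is the maximum of finitely many affine functions. -/
def IsPolyhedral {d : ℕ} (g : EuclideanSpace ℝ (Fin d) → ℝ) : Prop :=
  ∃ (n : ℕ) (v : Fin (n + 1) → EuclideanSpace ℝ (Fin d)) (c : Fin (n + 1) → ℝ),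
    ∀ x, g x = Finset.univ.sup' Finset.univ_nonempty (fun i => ⟪v i, x⟫ + c i)

/-- `y` is a proximal point of `f` at `x`: it minimizes `z ↦ f z + ‖x - z‖² / 2`. -/
def IsProxPt {d : ℕ} (f : EuclideanSpace ℝ (Fin d) → ℝ)
    (x y : EuclideanSpace ℝ (Fin d)) : Prop :=
  ∀ z, f y + ‖x - y‖ ^ 2 / 2 ≤ f z + ‖x - z‖ ^ 2 / 2

/-- The generalized strip `S(f)`: points `x` such that `f` is not differentiable at
`prox_f(x)`. -/
def GStrip {d : ℕ} (f : EuclideanSpace ℝ (Fin d) → ℝ) : Set (EuclideanSpace ℝ (Fin d)) :=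
  {x | ∀ y, IsProxPt f x y → ¬ DifferentiableAt ℝ f y}

local notation "E" d => EuclideanSpace ℝ (Fin d)

/-- If `h` has a lower bound `h w + ⟪q, z - w⟫ - C‖z - w‖²` touching at `w`, and `h` is
differentiable at `w`, then its derivative there is `⟪q, ·⟫`. -/
lemma key_deriv {d : ℕ} (h : (E d) → ℝ) (w q : E d) (C : ℝ) (L : (E d) →L[ℝ] ℝ)
    (hd : HasFDerivAt h L w)
    (hlb : ∀ z, ⟪q, z - w⟫ - C * ‖z - w‖ ^ 2 ≤ h z - h w) :
    ∀ e, L e = ⟪q, e⟫ := by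
  intro e
  set φ : ℝ → ℝ := fun t => h (w + t • e) - h w - t * ⟪q, e⟫ + (C * ‖e‖ ^ 2) * t ^ 2 with hφ
  have hmin : IsLocalMin φ 0 := by
    apply Filter.Eventually.of_forall
    intro t
    have h1 := hlb (w + t • e)
    have h2 : (w + t • e) - w = t • e := by abel
    rw [h2, real_inner_smul_right, norm_smul] at h1
    simp only [φ, zero_smul, add_zero, zero_mul, zero_pow, mul_zero, sub_self,
      Real.norm_eq_abs] at h1 ⊢
    rw [mul_pow, sq_abs] at h1; nlinarith [h1]
  have hd' : HasFDerivAt h L ((fun t : ℝ => w + t • e) 0) := by simpa using hd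
  have hline : HasDerivAt (fun t : ℝ => w + t • e) e 0 := by
    simpa using ((hasDerivAt_id (0:ℝ)).smul_const e).const_add w
  have h2 : HasDerivAt (fun t : ℝ => h (w + t • e)) (L e) 0 := hd'.comp_hasDerivAt 0 hline
  have h3 : HasDerivAt φ (L e - ⟪q, e⟫ + (C * ‖e‖ ^ 2) * (2 * 0)) 0 := by
    have ha : HasDerivAt (fun t : ℝ => t * ⟪q, e⟫) ⟪q, e⟫ 0 := by
      simpa using (hasDerivAt_id (0:ℝ)).mul_const (⟪q, e⟫)
    have hb : HasDerivAt (fun t : ℝ => (C * ‖e‖ ^ 2) * t ^ 2) ((C * ‖e‖ ^ 2) * (2 * 0)) 0 := by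
      simpa using (hasDerivAt_pow 2 (0:ℝ)).const_mul (C * ‖e‖ ^ 2)
    exact ((h2.sub_const (h w)).sub ha).add hb
  have := hmin.hasDerivAt_eq_zero h3
  linarith [this]

/-- The key inclusion: `S(f) ⊆ S(h)` for the combined function `h`. -/
lemma gstrip_sub {d n m : ℕ} (v : Fin (n+1) → E d) (c : Fin (n+1) → ℝ)
    (u : Fin (m+1) → E d) (b : Fin (m+1) → ℝ) :
    GStrip (fun x => Finset.univ.sup' Finset.univ_nonempty fun i => ⟪v i, x⟫ + c i) ⊆
      GStrip (fun x => Finset.univ.sup' Finset.univ_nonempty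
        fun p : Fin (n+1) × Fin (m+1) => ⟪v p.1 + u p.2, x⟫ + (c p.1 + b p.2 + ⟪v p.1, u p.2⟫)) := by
  set F : (E d) → ℝ := fun x => Finset.univ.sup' Finset.univ_nonempty fun i => ⟪v i, x⟫ + c i with hF
  set H : (E d) → ℝ := fun x => Finset.univ.sup' Finset.univ_nonempty
        fun p : Fin (n+1) × Fin (m+1) => ⟪v p.1 + u p.2, x⟫ + (c p.1 + b p.2 + ⟪v p.1, u p.2⟫) with hH
  intro x hx w hw hdiff
  have hFle : ∀ (i : Fin (n+1)) (z : E d), (⟪v i, z⟫ + c i : ℝ) ≤ F z := fun i z =>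
    Finset.le_sup' (fun i => (⟪v i, z⟫ + c i : ℝ)) (Finset.mem_univ i)
  have hHle : ∀ (p : Fin (n+1) × Fin (m+1)) (z : E d),
      (⟪v p.1 + u p.2, z⟫ + (c p.1 + b p.2 + ⟪v p.1, u p.2⟫) : ℝ) ≤ H z := fun p z =>
    Finset.le_sup' (fun p : Fin (n+1) × Fin (m+1) =>
      (⟪v p.1 + u p.2, z⟫ + (c p.1 + b p.2 + ⟪v p.1, u p.2⟫) : ℝ)) (Finset.mem_univ p)
  set L : (E d) →L[ℝ] ℝ := fderiv ℝ H w with hL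
  have hd : HasFDerivAt H L w := hdiff.hasFDerivAt
  -- Step A : L = ⟪x - w, ·⟫
  have hA : ∀ e, L e = ⟪x - w, e⟫ := by
    apply key_deriv H w (x - w) (1/2) L hd
    intro z
    have h1 := hw z
    have h2 : x - z = (x - w) - (z - w) := by abel
    have hexp : ‖(x - w) - (z - w)‖ ^ 2 = ‖x - w‖ ^ 2 - 2 * ⟪x - w, z - w⟫ + ‖z - w‖ ^ 2 :=
      norm_sub_sq_real _ _
    rw [h2] at h1
    linarith [h1, hexp]
  -- Step B : active pieces determine x
  have hB : ∀ i j, (⟪v i + u j, w⟫ + (c i + b j + ⟪v i, u j⟫) = H w) → x = w + (v i + u j) := by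
    intro i j hij
    have h1 : ∀ e, L e = ⟪v i + u j, e⟫ := by
      apply key_deriv H w (v i + u j) 0 L hd
      intro z
      have h2 : (⟪v i + u j, z⟫ + (c i + b j + ⟪v i, u j⟫) : ℝ) ≤ H z := hHle (i, j) z
      have h3 : (⟪v i + u j, z - w⟫ : ℝ) = ⟪v i + u j, z⟫ - ⟪v i + u j, w⟫ := inner_sub_right _ _ _
      rw [h3]
      linarith [h2, hij.ge, hij.le]
    have h4 : ∀ e, (⟪(v i + u j) - (x - w), e⟫ : ℝ) = 0 := by
      intro e
      rw [inner_sub_left]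
      rw [← h1 e, ← hA e]
      ring
    have h5 := h4 ((v i + u j) - (x - w))
    rw [real_inner_self_eq_norm_sq, pow_eq_zero_iff (by norm_num), norm_eq_zero,
      sub_eq_zero] at h5
    rw [h5]; abel
  -- the maximizing piece at w
  obtain ⟨⟨i0, j0⟩, -, hij0⟩ := Finset.exists_mem_eq_sup' (Finset.univ_nonempty)
      (fun p : Fin (n+1) × Fin (m+1) => ⟪v p.1 + u p.2, w⟫ + (c p.1 + b p.2 + ⟪v p.1, u p.2⟫))
  have hHw : (⟪v i0 + u j0, w⟫ + (c i0 + b j0 + ⟪v i0, u j0⟫) : ℝ) = H w := hij0.symm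
  set y : E d := w + u j0 with hy
  have hxy : x = w + (v i0 + u j0) := hB i0 j0 hHw
  -- Step C : i0 maximizes F at y
  have hC : ∀ i, (⟪v i, y⟫ + c i : ℝ) ≤ ⟪v i0, y⟫ + c i0 := by
    intro i
    have h1 : (⟪v i + u j0, w⟫ + (c i + b j0 + ⟪v i, u j0⟫) : ℝ) ≤ H w := hHle (i, j0) w
    rw [← hHw] at h1
    simp only [inner_add_left, inner_add_right, hy] at h1 ⊢
    linarith
  have hFy : F y = ⟪v i0, y⟫ + c i0 := by
    apply le_antisymm
    · exact Finset.sup'_le _ _ fun i _ => hC i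
    · exact hFle i0 y
  have hxmy : x - y = v i0 := by rw [hxy, hy]; abel
  -- Step D : y is a prox point of F at x
  have hD : IsProxPt F x y := by
    intro z
    have h1 : (⟪v i0, z⟫ + c i0 : ℝ) ≤ F z := hFle i0 z
    have h2 : x - z = v i0 + (y - z) := by rw [hxy, hy]; abel
    rw [hFy, hxmy, h2, norm_add_sq_real]
    have h3 : (⟪v i0, y - z⟫ : ℝ) = ⟪v i0, y⟫ - ⟪v i0, z⟫ := inner_sub_right _ _ _
    nlinarith [sq_nonneg ‖y - z‖, h1, h3]
  -- Step E : F is differentiable at y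
  have hE : DifferentiableAt ℝ F y := by
    have hvv : ∀ i, (⟪v i, y⟫ + c i : ℝ) = ⟪v i0, y⟫ + c i0 → v i = v i0 ∧ c i = c i0 := by
      intro i hi
      have hact : (⟪v i + u j0, w⟫ + (c i + b j0 + ⟪v i, u j0⟫) : ℝ) = H w := by
        rw [← hHw]
        simp only [inner_add_left, inner_add_right, hy] at hi ⊢
        linarith
      have h1 := hB i j0 hact
      have hv : v i = v i0 := by
        have h2 : w + (v i + u j0) = w + (v i0 + u j0) := by rw [← h1, ← hxy]
        have h3 := add_left_cancel h2
        have h4 := add_right_cancel h3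
        exact h4
      refine ⟨hv, ?_⟩
      rw [hv] at hi
      linarith
    have hev : ∀ i, ∀ᶠ z in nhds y, (⟪v i, z⟫ + c i : ℝ) ≤ ⟪v i0, z⟫ + c i0 := by
      intro i
      rcases eq_or_lt_of_le (hC i) with heq | hlt
      · obtain ⟨hv, hc⟩ := hvv i heq
        exact Filter.Eventually.of_forall fun z => by rw [hv, hc]
      · have hcont : ∀ (q : E d) (κ : ℝ), Continuous fun z : E d => (⟪q, z⟫ + κ : ℝ) := by
          intro q κ
          exact (continuous_const.inner continuous_id).add continuous_const
        exact ContinuousAt.eventually_lt ((hcont (v i) (c i)).continuousAt)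
          ((hcont (v i0) (c i0)).continuousAt) hlt |>.mono fun z hz => hz.le
    have hev' : F =ᶠ[nhds y] fun z => ⟪v i0, z⟫ + c i0 := by
      filter_upwards [Filter.eventually_all.2 hev] with z hz
      exact le_antisymm (Finset.sup'_le _ _ fun i _ => hz i) (hFle i0 z)
    have haff : DifferentiableAt ℝ (fun z : E d => (⟪v i0, z⟫ + c i0 : ℝ)) y :=
      ((innerSL ℝ (v i0)).differentiableAt).add_const _
    exact haff.congr_of_eventuallyEq hev'
  exact hx y hD hE

/-- The norm of each affine piece's gradient is bounded by the Lipschitz constant. -/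
lemma grad_bound {d n : ℕ} (v : Fin (n+1) → E d) (c : Fin (n+1) → ℝ) (Lf : ℝ) (h0 : 0 ≤ Lf)
    (hLf : ∀ x y : E d, |(Finset.univ.sup' Finset.univ_nonempty fun i => ⟪v i, x⟫ + c i) -
      (Finset.univ.sup' Finset.univ_nonempty fun i => ⟪v i, y⟫ + c i)| ≤ Lf * ‖x - y‖)
    (i : Fin (n+1)) : ‖v i‖ ≤ Lf := by
  set F : (E d) → ℝ := fun x => Finset.univ.sup' Finset.univ_nonempty fun i => ⟪v i, x⟫ + c i with hF
  have hFle : ∀ (j : Fin (n+1)) (z : E d), (⟪v j, z⟫ + c j : ℝ) ≤ F z := fun j z =>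
    Finset.le_sup' (fun j => (⟪v j, z⟫ + c j : ℝ)) (Finset.mem_univ j)
  by_contra hlt
  push_neg at hlt
  have hpos : 0 < ‖v i‖ := lt_of_le_of_lt h0 hlt
  set A : ℝ := ‖v i‖ ^ 2 - Lf * ‖v i‖ with hA
  have hApos : 0 < A := by nlinarith
  have hF0 : c i ≤ F 0 := by
    have := hFle i 0
    simpa using this
  set t : ℝ := (F 0 - c i) / A + 1 with ht
  have htpos : 0 ≤ t := by
    rw [ht]
    have h9 : 0 ≤ (F 0 - c i) / A := div_nonneg (by linarith) hApos.le
    linarith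
  have ha : (⟪v i, t • v i⟫ + c i : ℝ) ≤ F (t • v i) := hFle i (t • v i)
  rw [real_inner_smul_right, real_inner_self_eq_norm_sq] at ha
  have hb := hLf (t • v i) 0
  rw [sub_zero, norm_smul, Real.norm_eq_abs, abs_of_nonneg htpos] at hb
  have hb1 : F (t • v i) - F 0 ≤ Lf * (t * ‖v i‖) := (abs_sub_le_iff.mp hb).1
  have h2 : t * A ≤ F 0 - c i := by
    have : t * A = t * ‖v i‖ ^ 2 - Lf * (t * ‖v i‖) := by rw [hA]; ring
    linarith [ha, hb1, this]
  have h3 : t * A = (F 0 - c i) + A := by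
    rw [ht]; field_simp
  linarith

/-- The combined function is symmetric in the two representations. -/
lemma H_comm {d n m : ℕ} (v : Fin (n+1) → E d) (c : Fin (n+1) → ℝ)
    (u : Fin (m+1) → E d) (b : Fin (m+1) → ℝ) :
    (fun x : E d => Finset.univ.sup' Finset.univ_nonempty
      fun p : Fin (n+1) × Fin (m+1) => ⟪v p.1 + u p.2, x⟫ + (c p.1 + b p.2 + ⟪v p.1, u p.2⟫)) =
    (fun x : E d => Finset.univ.sup' Finset.univ_nonempty
      fun p : Fin (m+1) × Fin (n+1) => ⟪u p.1 + v p.2, x⟫ + (b p.1 + c p.2 + ⟪u p.1, v p.2⟫)) := by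
  have key : ∀ (i : Fin (n+1)) (j : Fin (m+1)) (x : E d),
      (⟪v i + u j, x⟫ + (c i + b j + ⟪v i, u j⟫) : ℝ) =
      ⟪u j + v i, x⟫ + (b j + c i + ⟪u j, v i⟫) := by
    intro i j x
    rw [add_comm (v i) (u j), real_inner_comm (v i) (u j)]
    ring
  funext x
  apply le_antisymm
  · apply Finset.sup'_le
    intro p _
    exact le_of_le_of_eq (le_of_eq (key p.1 p.2 x))
      (rfl) |>.trans (Finset.le_sup' (fun p : Fin (m+1) × Fin (n+1) =>
        (⟪u p.1 + v p.2, x⟫ + (b p.1 + c p.2 + ⟪u p.1, v p.2⟫) : ℝ)) (Finset.mem_univ (p.2, p.1)))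
  · apply Finset.sup'_le
    intro p _
    exact le_of_eq (key p.2 p.1 x).symm |>.trans
      (Finset.le_sup' (fun p : Fin (n+1) × Fin (m+1) =>
        (⟪v p.1 + u p.2, x⟫ + (c p.1 + b p.2 + ⟪v p.1, u p.2⟫) : ℝ)) (Finset.mem_univ (p.2, p.1)))

/-- **key combination lemma.** For polyhedral `f` and `g`, with Lipschitz
constants `Lf` and `Lg`, there is a polyhedral function `h` with
`S(f) ∪ S(g) ⊆ S(h)` and `Lip(h) ≤ Lf + Lg`. -/
theorem gstrip_union (d : ℕ) (f g : EuclideanSpace ℝ (Fin d) → ℝ)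
    (hf : IsPolyhedral f) (hg : IsPolyhedral g) (Lf Lg : ℝ)
    (hLf : ∀ x y, |f x - f y| ≤ Lf * ‖x - y‖)
    (hLg : ∀ x y, |g x - g y| ≤ Lg * ‖x - y‖) :
    ∃ h : EuclideanSpace ℝ (Fin d) → ℝ, IsPolyhedral h ∧
      (∀ x y, |h x - h y| ≤ (Lf + Lg) * ‖x - y‖) ∧
      GStrip f ∪ GStrip g ⊆ GStrip h := by
  obtain ⟨n, v, c, hfx⟩ := hf
  obtain ⟨m, u, b, hgx⟩ := hg
  have hfe : f = fun x => Finset.univ.sup' Finset.univ_nonempty fun i => ⟪v i, x⟫ + c i :=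
    funext hfx
  have hge : g = fun x => Finset.univ.sup' Finset.univ_nonempty fun j => ⟪u j, x⟫ + b j :=
    funext hgx
  subst hfe
  subst hge
  refine ⟨fun x => Finset.univ.sup' Finset.univ_nonempty
      fun p : Fin (n+1) × Fin (m+1) => ⟪v p.1 + u p.2, x⟫ + (c p.1 + b p.2 + ⟪v p.1, u p.2⟫),
    ?_, ?_, ?_⟩
  · -- polyhedral
    have hEq : n*m+n+m+1 = (n+1) * (m+1) := by ring
    set e : Fin (n*m+n+m+1) ≃ Fin (n+1) × Fin (m+1) :=
      (finCongr hEq).trans finProdFinEquiv.symm with he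
    refine ⟨n*m+n+m, fun k => v (e k).1 + u (e k).2,
      fun k => c (e k).1 + b (e k).2 + ⟪v (e k).1, u (e k).2⟫, fun x => ?_⟩
    apply le_antisymm
    · apply Finset.sup'_le
      intro p _
      have h1 : (⟪v p.1 + u p.2, x⟫ + (c p.1 + b p.2 + ⟪v p.1, u p.2⟫) : ℝ) =
          ⟪v (e (e.symm p)).1 + u (e (e.symm p)).2, x⟫ +
            (c (e (e.symm p)).1 + b (e (e.symm p)).2 + ⟪v (e (e.symm p)).1, u (e (e.symm p)).2⟫) := by
        rw [Equiv.apply_symm_apply]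
      rw [h1]
      exact Finset.le_sup' (fun k => (⟪v (e k).1 + u (e k).2, x⟫ +
        (c (e k).1 + b (e k).2 + ⟪v (e k).1, u (e k).2⟫) : ℝ)) (Finset.mem_univ (e.symm p))
    · apply Finset.sup'_le
      intro k _
      exact Finset.le_sup' (fun p : Fin (n+1) × Fin (m+1) =>
        (⟪v p.1 + u p.2, x⟫ + (c p.1 + b p.2 + ⟪v p.1, u p.2⟫) : ℝ)) (Finset.mem_univ (e k))
  · -- Lipschitz
    intro x y
    rcases eq_or_ne x y with rfl | hne
    · simp
    · have hpos : 0 < ‖x - y‖ := by rwa [norm_pos_iff, sub_ne_zero]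
      have h1f := (abs_nonneg _).trans (hLf x y)
      have h1g := (abs_nonneg _).trans (hLg x y)
      have h0f : 0 ≤ Lf := nonneg_of_mul_nonneg_right (by linarith [h1f] : (0:ℝ) ≤ ‖x - y‖ * Lf) hpos
      have h0g : 0 ≤ Lg := nonneg_of_mul_nonneg_right (by linarith [h1g] : (0:ℝ) ≤ ‖x - y‖ * Lg) hpos
      have hv : ∀ i, ‖v i‖ ≤ Lf := fun i => grad_bound v c Lf h0f hLf i
      have hu : ∀ j, ‖u j‖ ≤ Lg := fun j => grad_bound u b Lg h0g hLg j
      have key : ∀ x' y' : E d,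
          (Finset.univ.sup' Finset.univ_nonempty fun p : Fin (n+1) × Fin (m+1) =>
            ⟪v p.1 + u p.2, x'⟫ + (c p.1 + b p.2 + ⟪v p.1, u p.2⟫)) ≤
          (Finset.univ.sup' Finset.univ_nonempty fun p : Fin (n+1) × Fin (m+1) =>
            ⟪v p.1 + u p.2, y'⟫ + (c p.1 + b p.2 + ⟪v p.1, u p.2⟫)) + (Lf + Lg) * ‖x' - y'‖ := by
        intro x' y'
        apply Finset.sup'_le
        intro p _
        have h1 : (⟪v p.1 + u p.2, y'⟫ + (c p.1 + b p.2 + ⟪v p.1, u p.2⟫) : ℝ) ≤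
            Finset.univ.sup' Finset.univ_nonempty fun p : Fin (n+1) × Fin (m+1) =>
            ⟪v p.1 + u p.2, y'⟫ + (c p.1 + b p.2 + ⟪v p.1, u p.2⟫) :=
          Finset.le_sup' (fun p : Fin (n+1) × Fin (m+1) =>
            (⟪v p.1 + u p.2, y'⟫ + (c p.1 + b p.2 + ⟪v p.1, u p.2⟫) : ℝ)) (Finset.mem_univ p)
        have h2 : (⟪v p.1 + u p.2, x'⟫ : ℝ) - ⟪v p.1 + u p.2, y'⟫ = ⟪v p.1 + u p.2, x' - y'⟫ :=
          (inner_sub_right _ _ _).symm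
        have h3 : (⟪v p.1 + u p.2, x' - y'⟫ : ℝ) ≤ ‖v p.1 + u p.2‖ * ‖x' - y'‖ :=
          real_inner_le_norm _ _
        have h4 : ‖v p.1 + u p.2‖ ≤ Lf + Lg :=
          (norm_add_le _ _).trans (add_le_add (hv p.1) (hu p.2))
        have h5 : ‖v p.1 + u p.2‖ * ‖x' - y'‖ ≤ (Lf + Lg) * ‖x' - y'‖ :=
          mul_le_mul_of_nonneg_right h4 (norm_nonneg _)
        linarith
      rw [abs_sub_le_iff]
      constructor
      · linarith [key x y]
      · have h6 := key y x
        rw [norm_sub_rev] at h6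
        linarith
  · -- strips
    intro x hx
    rcases hx with hx | hx
    · exact gstrip_sub v c u b hx
    · have h7 := gstrip_sub u b v c hx
      rw [H_comm u b v c] at h7
      exact h7
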